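/- Let (Λ,η) be a special isothermic surface in S^n of type d ∈ ℕ₀ with respect to a polynomial conserved quantity p(t), and let (Λ_s,η_s) be a T-transform of (Λ,η) associated to the gauge transformation Φ_s, s ∈ ℝ. Then (Λ_s,η_s) is a special isothermic surface of type d with respect to a polynomial conserved quantity whose constant term equals Φ_s(p(s)); explicitly, q(t) := Φ_s p(t+s) is a polynomial conserved quantity of (Λ_s,η_s) of degree d. -/

import Mathlib

noncomputable section

open Finset

/-- Minkowski space `ℝ^{n+1,1}`, modelled on `Fin (n+2) → ℝ`. -/
abbrev MV (n : ℕ) : Type := EuclideanSpace ℝ (Fin (n + 2))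

/-- The Minkowski inner product of signature `(n+1,1)`. -/
def mink (n : ℕ) (x y : MV n) : ℝ :=
  ∑ i : Fin (n + 1), x i.castSucc * y i.castSucc
    - x (Fin.last (n + 1)) * y (Fin.last (n + 1))

/-- The light cone `L ⊂ ℝ^{n+1,1}`. -/
def LightCone (n : ℕ) : Set (MV n) := {v | v ≠ 0 ∧ mink n v v = 0}

/-- The skew endomorphism `u ∧ v`, acting by `(u ∧ v) w = (u,w)v − (v,w)u`. -/
def wedge (n : ℕ) (u v w : MV n) : MV n :=
  mink n u w • v - mink n v w • u

/-- The surface domain: a two-dimensional coordinate chart. -/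
abbrev Surf : Type := ℝ × ℝ

/-- the coordinate direction ∂/∂u -/
def du : Surf := (1, 0)

/-- the coordinate direction ∂/∂v -/
def dv : Surf := (0, 1)

/-- partial derivative of a section in a coordinate direction -/
def pd {n : ℕ} (e : Surf) (f : Surf → MV n) (x : Surf) : MV n :=
  fderiv ℝ f x e

lemma mink_add_left (n : ℕ) (a b c : MV n) :
    mink n (a + b) c = mink n a c + mink n b c := by
  simp [mink, PiLp.add_apply, add_mul, Finset.sum_add_distrib]; ring

lemma mink_smul_left (n : ℕ) (r : ℝ) (a c : MV n) :
    mink n (r • a) c = r * mink n a c := by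
  simp [mink, PiLp.smul_apply, smul_eq_mul, mul_sub, Finset.mul_sum, mul_assoc]

lemma mink_zero_left (n : ℕ) (c : MV n) : mink n 0 c = 0 := by
  simp [mink]

/-- An isothermic surface `(Λ,η)` in `S^n = P(L)`, given by a nowhere-zero null
lift `F` of the immersion `Λ` together with the 1-form
`η = F ∧ W₁ du + F ∧ W₂ dv` with values in `Λ ∧ Λ^⊥`. -/
structure IsothermicSurface (n : ℕ) : Type where
  F : Surf → MV n
  W₁ : Surf → MV n
  W₂ : Surf → MV n
  smooth_F : ContDiff ℝ (⊤ : ℕ∞) F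
  smooth_W₁ : ContDiff ℝ (⊤ : ℕ∞) W₁
  smooth_W₂ : ContDiff ℝ (⊤ : ℕ∞) W₂
  F_ne : ∀ x, F x ≠ 0
  F_null : ∀ x, mink n (F x) (F x) = 0
  immersed : ∀ x, LinearIndependent ℝ ![F x, pd du F x, pd dv F x]
  W₁_perp : ∀ x, mink n (F x) (W₁ x) = 0
  W₂_perp : ∀ x, mink n (F x) (W₂ x) = 0
  eta_ne : ∃ x z, wedge n (F x) (W₁ x) z ≠ 0 ∨ wedge n (F x) (W₂ x) z ≠ 0
  eta_closed : ∀ x z,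
    fderiv ℝ (fun y => wedge n (F y) (W₂ y) z) x du
      = fderiv ℝ (fun y => wedge n (F y) (W₁ y) z) x dv

/-- `s` is a parallel section for the flat connection `∇^t = d + tη`. -/
def ParallelSection (n : ℕ) (S : IsothermicSurface n) (t : ℝ)
    (s : Surf → MV n) : Prop :=
  ∀ x, fderiv ℝ s x du + t • wedge n (S.F x) (S.W₁ x) (s x) = 0
     ∧ fderiv ℝ s x dv + t • wedge n (S.F x) (S.W₂ x) (s x) = 0

/-- A polynomial conserved quantity of degree `d` of the isothermic surface
`(Λ,η)`: a polynomial `p(t) = Σ_{k=0}^d p_k t^k` of (smooth) sections, of exact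
degree `d`, with `∇^t p(t) = 0` for all `t`. -/
structure PolyConservedQuantity (n : ℕ) (S : IsothermicSurface n) (d : ℕ) : Type where
  coeff : ℕ → Surf → MV n
  smooth : ∀ k, ContDiff ℝ (⊤ : ℕ∞) (coeff k)
  coeff_eq_zero : ∀ k, d < k → coeff k = 0
  top_ne : coeff d ≠ 0
  conserved : ∀ t : ℝ, ParallelSection n S t
    (fun x => ∑ k ∈ Finset.range (d + 1), t ^ k • coeff k x)

/-- evaluation `p(t)` of a polynomial conserved quantity -/
def pcEval {n : ℕ} {S : IsothermicSurface n} {d : ℕ}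
    (p : PolyConservedQuantity n S d) (t : ℝ) (x : Surf) : MV n :=
  ∑ k ∈ Finset.range (d + 1), t ^ k • p.coeff k x

/-- `(Λ,η)` is a special isothermic surface of type `d`. -/
def SpecialOfType (n : ℕ) (S : IsothermicSurface n) (d : ℕ) : Prop :=
  Nonempty (PolyConservedQuantity n S d)

/-- `p₀ ∈ ⟨w⟩`: the polynomial conserved quantity exhibits `(Λ,η)` as special
isothermic in the space-form `E(w)`. -/
def InSpaceForm {n : ℕ} {S : IsothermicSurface n} {d : ℕ}
    (p : PolyConservedQuantity n S d) (w : MV n) : Prop :=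
  ∃ c : ℝ, ∀ x, p.coeff 0 x = c • w

/-- fullness: the image of `Λ` lies in no proper subsphere -/
def Full (n : ℕ) (S : IsothermicSurface n) : Prop :=
  ¬ ∃ p : MV n, p ≠ 0 ∧ ∀ x, mink n p (S.F x) = 0
/-- A Darboux transform `Λ̂` of `(Λ,η)` with parameter `m`, given by a
`∇^m`-parallel null lift `G` spanning an immersed surface with `Λ̂ ∩ Λ = 0`. -/
structure DarbouxTransform (n : ℕ) (S : IsothermicSurface n) (m : ℝ) : Type where
  G : Surf → MV n
  smooth_G : ContDiff ℝ (⊤ : ℕ∞) G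
  G_ne : ∀ x, G x ≠ 0
  G_null : ∀ x, mink n (G x) (G x) = 0
  immersed : ∀ x, LinearIndependent ℝ ![G x, pd du G x, pd dv G x]
  disjoint : ∀ x, G x ∉ Submodule.span ℝ {S.F x}
  parallel : ParallelSection n S m G

/-- The gauge transformation `Γ_{⟨F⟩}^{⟨G⟩}(c)`: acts as `c` on `⟨G⟩`, as `1` on
`(⟨F⟩ ⊕ ⟨G⟩)^⊥` and as `c⁻¹` on `⟨F⟩`. -/
def gaugeG (n : ℕ) (F G : MV n) (c : ℝ) (z : MV n) : MV n :=
  ((mink n G z / mink n F G) / c) • F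
    + (c * (mink n F z / mink n F G)) • G
    + (z - (mink n G z / mink n F G) • F - (mink n F z / mink n F G) • G)

/-- `Γ_Λ^{Λ̂}(1 − t/m) · (d + tη) = d + tη̂` for all `t ≠ m`: the gauge relation
between the pencils of flat connections of an isothermic surface `S` and of (an
isothermic structure `T` on) its Darboux transform with parameter `m`. -/
def GaugeRel (n : ℕ) (S T : IsothermicSurface n) (m : ℝ) : Prop :=
  ∀ t : ℝ, t ≠ m → ∀ s : Surf → MV n, ContDiff ℝ (⊤ : ℕ∞) s → ∀ x : Surf,
    (fderiv ℝ (fun y => gaugeG n (S.F y) (T.F y) (1 - t / m) (s y)) x du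
        + t • wedge n (T.F x) (T.W₁ x) (gaugeG n (S.F x) (T.F x) (1 - t / m) (s x))
      = gaugeG n (S.F x) (T.F x) (1 - t / m)
          (fderiv ℝ s x du + t • wedge n (S.F x) (S.W₁ x) (s x)))
    ∧ (fderiv ℝ (fun y => gaugeG n (S.F y) (T.F y) (1 - t / m) (s y)) x dv
        + t • wedge n (T.F x) (T.W₂ x) (gaugeG n (S.F x) (T.F x) (1 - t / m) (s x))
      = gaugeG n (S.F x) (T.F x) (1 - t / m)
          (fderiv ℝ s x dv + t • wedge n (S.F x) (S.W₂ x) (s x)))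

/-- `Λ̂ = ⟨p(m)⟩` with `(p(m),p(m)) = 0`: the Darboux transform `D` is a
complementary surface of `(Λ,η)` with respect to `p(t)`. -/
def IsComplementary (n : ℕ) {S : IsothermicSurface n} {d : ℕ}
    (p : PolyConservedQuantity n S d) {m : ℝ} (D : DarbouxTransform n S m) : Prop :=
  (∀ x, mink n (pcEval p m x) (pcEval p m x) = 0) ∧
  (∀ x, Submodule.span ℝ {D.G x} = Submodule.span ℝ {pcEval p m x})

/-- `m` is a repeated root of the (constant-coefficient) polynomial `(p(t),p(t))`. -/
def IsRepeatedRootAt {n : ℕ} {S : IsothermicSurface n} {d : ℕ}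
    (p : PolyConservedQuantity n S d) (m : ℝ) : Prop :=
  ∀ x, mink n (pcEval p m x) (pcEval p m x) = 0
    ∧ deriv (fun t : ℝ => mink n (pcEval p t x) (pcEval p t x)) m = 0
/-- metric coefficient `g₁₁ = (F_u,F_u)` of the induced metric -/
def gUU (n : ℕ) (F : Surf → MV n) (x : Surf) : ℝ := mink n (pd du F x) (pd du F x)

/-- metric coefficient `g₁₂ = (F_u,F_v)` -/
def gUV (n : ℕ) (F : Surf → MV n) (x : Surf) : ℝ := mink n (pd du F x) (pd dv F x)

/-- metric coefficient `g₂₂ = (F_v,F_v)` -/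
def gVV (n : ℕ) (F : Surf → MV n) (x : Surf) : ℝ := mink n (pd dv F x) (pd dv F x)

/-- `(𝐇, N)`, the inner product of the mean curvature vector of `F` (in a
space-form `E(w)`) with a normal field `N`: half the trace with respect to the
induced metric of the `N`-component of the second fundamental form. -/
def meanCurv (n : ℕ) (F N : Surf → MV n) (x : Surf) : ℝ :=
  (gVV n F x * mink n (pd du (pd du F) x) (N x)
    - 2 * gUV n F x * mink n (pd du (pd dv F) x) (N x)
    + gUU n F x * mink n (pd dv (pd dv F) x) (N x))
  / (2 * (gUU n F x * gVV n F x - gUV n F x ^ 2))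

/-- `N` is a unit normal field of the lift `F : Σ → E(w)`. -/
def IsUnitNormal (n : ℕ) (F N : Surf → MV n) (w : MV n) : Prop :=
  (∀ x, mink n (N x) (N x) = 1) ∧ (∀ x, mink n (N x) w = 0)
    ∧ (∀ x, mink n (N x) (F x) = 0)
    ∧ (∀ x, mink n (N x) (pd du F x) = 0) ∧ (∀ x, mink n (N x) (pd dv F x) = 0)

/-- `N` is parallel for the normal connection of `F : Σ → E(w)`: the derivative
of `N` has no component in the normal bundle of `F` in `E(w)`. -/
def ParallelNormal (n : ℕ) (F N : Surf → MV n) (w : MV n) : Prop :=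
  ∀ x e, fderiv ℝ N x e ∈ Submodule.span ℝ {F x, pd du F x, pd dv F x, w}

/-- the chart coordinates `(u,v)` are conformal curvature line coordinates
corresponding to `η`, with conformal factor `e^{2θ}`:
`I = e^{2θ}(du² + dv²)` and `η = e^{−2θ} F ∧ (−F_u du + F_v dv)`. -/
def ConformalCoords (n : ℕ) (S : IsothermicSurface n) (θ : Surf → ℝ) : Prop :=
  ContDiff ℝ (⊤ : ℕ∞) θ
  ∧ (∀ x, mink n (pd du S.F x) (pd du S.F x) = Real.exp (2 * θ x))
  ∧ (∀ x, mink n (pd dv S.F x) (pd dv S.F x) = Real.exp (2 * θ x))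
  ∧ (∀ x, mink n (pd du S.F x) (pd dv S.F x) = 0)
  ∧ (∀ x z, wedge n (S.F x) (S.W₁ x) z
      = Real.exp (-(2 * θ x)) • wedge n (S.F x) (-pd du S.F x) z)
  ∧ (∀ x z, wedge n (S.F x) (S.W₂ x) z
      = Real.exp (-(2 * θ x)) • wedge n (S.F x) (pd dv S.F x) z)

/-- the second fundamental form of the lift `F` in `E(w)` with respect to the
unit normal `N` is `II = e^{2θ}(k₁ du² + k₂ dv²)`. -/
def PrincipalCurvatures (n : ℕ) (S : IsothermicSurface n) (N : Surf → MV n)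
    (θ k₁ k₂ : Surf → ℝ) : Prop :=
  (∀ x, mink n (pd du (pd du S.F) x) (N x) = Real.exp (2 * θ x) * k₁ x)
  ∧ (∀ x, mink n (pd du (pd dv S.F) x) (N x) = 0)
  ∧ (∀ x, mink n (pd dv (pd dv S.F) x) (N x) = Real.exp (2 * θ x) * k₂ x)

/-- partial derivative of a real function on the surface -/
def pdR (e : Surf) (f : Surf → ℝ) (x : Surf) : ℝ := fderiv ℝ f x e
/-- `(Λ^c, η^c)` is the Christoffel transform of `(Λ,η)` with respect to the
pair `(v∞, v₀)`, witnessed by the stereoprojections `f`, `f^c` into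
`ℝ^n = ⟨v₀,v∞⟩^⊥`:  `F = exp(f ∧ v∞)v₀`, `F^c = exp(f^c ∧ v₀)v∞`,
`η = Ad(exp(f ∧ v∞))(df^c ∧ v₀)` and `η^c = Ad(exp(f^c ∧ v₀))(df ∧ v∞)`. -/
def IsChristoffelPair (n : ℕ) (S Sc : IsothermicSurface n) (vinf v0 : MV n)
    (f fc : Surf → MV n) : Prop :=
  vinf ∈ LightCone n ∧ v0 ∈ LightCone n ∧ mink n v0 vinf = -1
  ∧ ContDiff ℝ (⊤ : ℕ∞) f ∧ ContDiff ℝ (⊤ : ℕ∞) fc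
  ∧ (∀ x, mink n (f x) v0 = 0) ∧ (∀ x, mink n (f x) vinf = 0)
  ∧ (∀ x, mink n (fc x) v0 = 0) ∧ (∀ x, mink n (fc x) vinf = 0)
  ∧ (∀ x, S.F x = v0 + f x + (mink n (f x) (f x) / 2) • vinf)
  ∧ (∀ x, Sc.F x = vinf + fc x + (mink n (fc x) (fc x) / 2) • v0)
  ∧ (∀ x z, wedge n (S.F x) (S.W₁ x) z
      = wedge n (pd du fc x + mink n (f x) (pd du fc x) • vinf) (S.F x) z)
  ∧ (∀ x z, wedge n (S.F x) (S.W₂ x) z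
      = wedge n (pd dv fc x + mink n (f x) (pd dv fc x) • vinf) (S.F x) z)
  ∧ (∀ x z, wedge n (Sc.F x) (Sc.W₁ x) z
      = wedge n (pd du f x + mink n (fc x) (pd du f x) • v0) (Sc.F x) z)
  ∧ (∀ x z, wedge n (Sc.F x) (Sc.W₂ x) z
      = wedge n (pd dv f x + mink n (fc x) (pd dv f x) • v0) (Sc.F x) z)

/-- `Φ` is an orthogonal gauge transformation with `Φ · (d + sη) = d`. -/
def IsTGauge (n : ℕ) (S : IsothermicSurface n) (s : ℝ)
    (Φ : Surf → MV n → MV n) : Prop :=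
  (∀ x, IsLinearMap ℝ (Φ x))
  ∧ (∀ x z z', mink n (Φ x z) (Φ x z') = mink n z z')
  ∧ (∀ σ : Surf → MV n, ContDiff ℝ (⊤ : ℕ∞) σ → ∀ x,
      (fderiv ℝ (fun y => Φ y (σ y)) x du
         = Φ x (fderiv ℝ σ x du + s • wedge n (S.F x) (S.W₁ x) (σ x)))
      ∧ (fderiv ℝ (fun y => Φ y (σ y)) x dv
         = Φ x (fderiv ℝ σ x dv + s • wedge n (S.F x) (S.W₂ x) (σ x))))

/-- `(Λ_s, η_s)` is the T-transform of `(Λ,η)` associated to `Φ_s`: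
`Λ_s = Φ_s Λ` and `η_s = Ad(Φ_s) η`. -/
def IsTTransform (n : ℕ) (S : IsothermicSurface n) (s : ℝ)
    (Φ : Surf → MV n → MV n) (Ss : IsothermicSurface n) : Prop :=
  IsTGauge n S s Φ
  ∧ (∀ x, Ss.F x = Φ x (S.F x))
  ∧ (∀ x z, wedge n (Ss.F x) (Ss.W₁ x) (Φ x z) = Φ x (wedge n (S.F x) (S.W₁ x) z))
  ∧ (∀ x z, wedge n (Ss.F x) (Ss.W₂ x) (Φ x z) = Φ x (wedge n (S.F x) (S.W₂ x) z))

/-- orthogonal complement with respect to the Minkowski form -/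
def mperp (n : ℕ) (U : Submodule ℝ (MV n)) : Submodule ℝ (MV n) where
  carrier := {v | ∀ u ∈ U, mink n v u = 0}
  add_mem' := by
    intro a b ha hb u hu
    rw [mink_add_left, ha u hu, hb u hu, add_zero]
  zero_mem' := by
    intro u hu; exact mink_zero_left n u
  smul_mem' := by
    intro r a ha u hu
    rw [mink_smul_left, ha u hu, mul_zero]

/-- the spherical system of `Λ` and a Darboux transform `Λ̂ = ⟨G⟩`: the
`(n−2)`-sphere congruence `C = Λ ⊕ Λ̂ ⊕ V_R^⊥`, `V_R = Λ^{(1)} ⊕ Λ̂`. -/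
def sphericalSystem (n : ℕ) (S : IsothermicSurface n) (G : Surf → MV n)
    (x : Surf) : Submodule ℝ (MV n) :=
  Submodule.span ℝ {S.F x, G x}
    ⊔ mperp n (Submodule.span ℝ {S.F x, pd du S.F x, pd dv S.F x, G x})

/-- the sphere-planes congruence `P = C + ⟨w⟩` of `Λ` and `Λ̂ = ⟨G⟩` with
respect to `w`. -/
def spherePlanes (n : ℕ) (S : IsothermicSurface n) (G : Surf → MV n)
    (w : MV n) (x : Surf) : Submodule ℝ (MV n) :=
  sphericalSystem n S G x ⊔ Submodule.span ℝ {w}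
/-! ### Auxiliary lemmas -/

open scoped ContDiff ENNReal NNReal

section MinkLemmas

variable {n : ℕ}

lemma mink_symm (a b : MV n) : mink n a b = mink n b a := by
  simp only [mink, mul_comm]

lemma mink_add_right (a b c : MV n) :
    mink n a (b + c) = mink n a b + mink n a c := by
  rw [mink_symm, mink_add_left, mink_symm b a, mink_symm c a]

lemma mink_smul_right (r : ℝ) (a c : MV n) :
    mink n a (r • c) = r * mink n a c := by
  rw [mink_symm, mink_smul_left, mink_symm]

/-- `wedge n u v` as a linear map in its third argument. -/
noncomputable def wedgeL (u v : MV n) : MV n →ₗ[ℝ] MV n where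
  toFun := fun z => wedge n u v z
  map_add' := fun b c => by
    simp only [wedge, mink_add_right, add_smul]
    abel
  map_smul' := fun r b => by
    simp only [wedge, mink_smul_right, RingHom.id_apply, smul_sub, smul_smul]

lemma wedge_zero₃ (u v : MV n) : wedge n u v 0 = 0 := (wedgeL u v).map_zero

lemma wedge_smul₃ (u v : MV n) (r : ℝ) (a : MV n) :
    wedge n u v (r • a) = r • wedge n u v a := (wedgeL u v).map_smul r a

lemma wedge_sum₃ {ι : Type*} (u v : MV n) (s : Finset ι) (g : ι → MV n) :
    wedge n u v (∑ i ∈ s, g i) = ∑ i ∈ s, wedge n u v (g i) :=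
  map_sum (wedgeL u v) g s

/-- nondegeneracy of the Minkowski form -/
lemma mink_nondeg {v : MV n} (h : ∀ z : MV n, mink n v z = 0) : v = 0 := by
  ext i
  induction i using Fin.lastCases with
  | last =>
    have h1 := h (EuclideanSpace.single (Fin.last (n+1)) 1)
    simp only [mink, EuclideanSpace.single_apply] at h1
    norm_num at h1
    have h3 : v (Fin.last (n+1)) = 0 := by linarith
    exact h3
  | cast k =>
    have h1 := h (EuclideanSpace.single k.castSucc 1)
    simp only [mink, EuclideanSpace.single_apply] at h1
    have h2 : ∀ j : Fin (n+1), v j.castSucc *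
        (if (j.castSucc : Fin (n+2)) = k.castSucc then (1:ℝ) else 0)
        = if j = k then v j.castSucc else 0 := by
      intro j
      by_cases hj : j = k
      · subst hj; rw [if_pos rfl, if_pos rfl, mul_one]
      · rw [if_neg (by simpa [Fin.castSucc_inj] using hj), if_neg hj, mul_zero]
    rw [Finset.sum_congr rfl (fun j _ => h2 j), Finset.sum_ite_eq' _ k] at h1
    rw [if_neg ((Fin.castSucc_lt_last k).ne')] at h1
    simp only [Finset.mem_univ, if_true, mul_zero, sub_zero] at h1
    exact h1

end MinkLemmas

section PolyExtract

lemma poly_coeff_zero_real (N : ℕ) (b : ℕ → ℝ)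
    (h : ∀ t : ℝ, ∑ k ∈ Finset.range N, t ^ k * b k = 0) :
    ∀ k, k < N → b k = 0 := by
  intro k hk
  set P : Polynomial ℝ := ∑ j ∈ Finset.range N, Polynomial.C (b j) * Polynomial.X ^ j with hP
  have hev : ∀ t : ℝ, P.eval t = 0 := by
    intro t
    rw [hP, Polynomial.eval_finset_sum]
    rw [← h t]
    apply Finset.sum_congr rfl
    intro j _
    rw [Polynomial.eval_mul, Polynomial.eval_C, Polynomial.eval_pow, Polynomial.eval_X, mul_comm]
  have hP0 : P = 0 := by
    apply Polynomial.funext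
    intro t
    rw [hev t, Polynomial.eval_zero]
  have hco : P.coeff k = b k := by
    rw [hP, Polynomial.finset_sum_coeff]
    rw [Finset.sum_congr rfl (fun j _ => Polynomial.coeff_C_mul_X_pow (b j) j k)]
    rw [Finset.sum_ite_eq (Finset.range N) k]
    simp [hk]
  rw [← hco, hP0]
  simp

lemma poly_coeff_zero_vec {n : ℕ} (N : ℕ) (a : ℕ → MV n)
    (h : ∀ t : ℝ, ∑ k ∈ Finset.range N, t ^ k • a k = 0) :
    ∀ k, k < N → a k = 0 := by
  intro k hk
  ext i
  have h1 : ∀ t : ℝ, ∑ j ∈ Finset.range N, t ^ j * a j i = 0 := by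
    intro t
    have h2 := congrArg (fun v : MV n => v i) (h t)
    have h3 : (∑ j ∈ Finset.range N, t ^ j • a j) i
        = ∑ j ∈ Finset.range N, t ^ j * a j i := by
      rw [WithLp.ofLp_sum, Finset.sum_apply]
      rfl
    rw [h3] at h2
    exact h2
  have := poly_coeff_zero_real N (fun j => a j i) h1 k hk
  simpa using this

section SmoothLemmas

variable {n : ℕ} {E : Type*} [NormedAddCommGroup E] [NormedSpace ℝ E]

lemma contDiff_coord (j : Fin (n+2)) {f : E → MV n} (hf : ContDiff ℝ (⊤ : ℕ∞) f) :
    ContDiff ℝ (⊤ : ℕ∞) (fun x => f x j) :=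
  (EuclideanSpace.proj (𝕜 := ℝ) j).contDiff.comp hf

lemma contDiff_mink {f g : E → MV n} (hf : ContDiff ℝ (⊤ : ℕ∞) f) (hg : ContDiff ℝ (⊤ : ℕ∞) g) :
    ContDiff ℝ (⊤ : ℕ∞) (fun x => mink n (f x) (g x)) := by
  unfold mink
  apply ContDiff.sub
  · apply ContDiff.sum
    intro i _
    exact (contDiff_coord _ hf).mul (contDiff_coord _ hg)
  · exact (contDiff_coord _ hf).mul (contDiff_coord _ hg)

lemma contDiff_wedge {f g h : E → MV n} (hf : ContDiff ℝ (⊤ : ℕ∞) f) (hg : ContDiff ℝ (⊤ : ℕ∞) g)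
    (hh : ContDiff ℝ (⊤ : ℕ∞) h) :
    ContDiff ℝ (⊤ : ℕ∞) (fun x => wedge n (f x) (g x) (h x)) := by
  unfold wedge
  exact ((contDiff_mink hf hh).smul hg).sub ((contDiff_mink hg hh).smul hf)

end SmoothLemmas

section CLMDecomp

variable {V : Type*} [NormedAddCommGroup V] [NormedSpace ℝ V]

lemma clm_decomp (L : (ℝ × ℝ) →L[ℝ] V) :
    L = (ContinuousLinearMap.fst ℝ ℝ ℝ).smulRight (L du)
      + (ContinuousLinearMap.snd ℝ ℝ ℝ).smulRight (L dv) := by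
  apply ContinuousLinearMap.ext
  intro e
  have he : e = e.1 • du + e.2 • dv := by
    simp [du, dv, Prod.ext_iff]
  rw [ContinuousLinearMap.add_apply, ContinuousLinearMap.smulRight_apply,
    ContinuousLinearMap.smulRight_apply]
  conv_lhs => rw [he]
  rw [map_add, map_smul, map_smul]
  rfl

end CLMDecomp

section Antideriv
variable {E F : Type*} [NormedAddCommGroup E] [NormedSpace ℝ E]
  [NormedAddCommGroup F] [NormedSpace ℝ F] [CompleteSpace F]

end Antideriv

section Main
variable {E F : Type*} [NormedAddCommGroup E] [NormedSpace ℝ E]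
  [NormedAddCommGroup F] [NormedSpace ℝ F] [CompleteSpace F]

theorem contDiffTop_of_fderiv {f : E → F} (hd : Differentiable ℝ f)
    (hg : ContDiff ℝ (⊤ : ℕ∞) (fderiv ℝ f)) : ContDiff ℝ (⊤ : ℕ∞) f := by
  exact contDiff_infty_iff_fderiv.mpr ⟨hd, hg⟩

end Main

section TCoeff

variable {n d : ℕ} {S : IsothermicSurface n}

/-- coefficients of the shifted polynomial `p(t+s)` -/
noncomputable def tcoeff (p : PolyConservedQuantity n S d) (s : ℝ) (k : ℕ) :
    Surf → MV n :=
  fun x => ∑ j ∈ Finset.range (d+1), ((j.choose k : ℝ) * s ^ (j - k)) • p.coeff j x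

/-- predecessor family: `tprev 0 = 0`, `tprev (k+1) = tcoeff k` -/
noncomputable def tprev (p : PolyConservedQuantity n S d) (s : ℝ) : ℕ → Surf → MV n
  | 0 => fun _ => 0
  | (k+1) => tcoeff p s k

lemma tcoeff_smooth (p : PolyConservedQuantity n S d) (s : ℝ) (k : ℕ) :
    ContDiff ℝ (⊤ : ℕ∞) (tcoeff p s k) :=
  ContDiff.sum fun j _ => (p.smooth j).const_smul _

lemma tcoeff_high (p : PolyConservedQuantity n S d) (s : ℝ) (k : ℕ) (hk : d < k) :
    tcoeff p s k = fun _ => 0 := by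
  funext x
  apply Finset.sum_eq_zero
  intro j hj
  have h1 : j.choose k = 0 :=
    Nat.choose_eq_zero_of_lt (lt_of_lt_of_le (Finset.mem_range.mp hj) hk)
  simp [h1]

lemma tcoeff_eval (p : PolyConservedQuantity n S d) (s t : ℝ) (x : Surf) :
    ∑ k ∈ Finset.range (d+1), t ^ k • tcoeff p s k x = pcEval p (t+s) x := by
  unfold tcoeff pcEval
  have h1 : ∀ k ∈ Finset.range (d+1),
      t ^ k • ∑ j ∈ Finset.range (d+1), ((j.choose k : ℝ) * s ^ (j - k)) • p.coeff j x
      = ∑ j ∈ Finset.range (d+1), (t ^ k * ((j.choose k : ℝ) * s ^ (j - k))) • p.coeff j x := by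
    intro k _
    rw [Finset.smul_sum]
    exact Finset.sum_congr rfl fun j _ => by rw [smul_smul]
  rw [Finset.sum_congr rfl h1, Finset.sum_comm]
  apply Finset.sum_congr rfl
  intro j hj
  rw [← Finset.sum_smul]
  congr 1
  have h2 : ∑ k ∈ Finset.range (j+1), t ^ k * ((j.choose k : ℝ) * s ^ (j - k))
      = ∑ k ∈ Finset.range (d+1), t ^ k * ((j.choose k : ℝ) * s ^ (j - k)) := by
    apply Finset.sum_subset
    · intro k hk
      rw [Finset.mem_range] at hk ⊢
      have := Finset.mem_range.mp hj
      omega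
    · intro k _ hk
      have h3 : j < k := by
        rw [Finset.mem_range, not_lt] at hk
        omega
      rw [Nat.choose_eq_zero_of_lt h3]
      simp
  rw [← h2, add_pow]
  apply Finset.sum_congr rfl
  intro k _
  ring

lemma tcoeff_eval' (p : PolyConservedQuantity n S d) (s t : ℝ) (x : Surf) :
    ∑ k ∈ Finset.range (d+2), t ^ k • tcoeff p s k x = pcEval p (t+s) x := by
  rw [Finset.sum_range_succ, tcoeff_high p s (d+1) (by omega)]
  simp [tcoeff_eval p s t x]

lemma tcoeff_zero (p : PolyConservedQuantity n S d) (s : ℝ) (x : Surf) :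
    tcoeff p s 0 x = pcEval p s x := by
  unfold tcoeff pcEval
  apply Finset.sum_congr rfl
  intro j _
  simp

lemma tcoeff_top (p : PolyConservedQuantity n S d) (s : ℝ) (x : Surf) :
    tcoeff p s d x = p.coeff d x := by
  unfold tcoeff
  rw [Finset.sum_eq_single d]
  · simp
  · intro j hj hne
    have h1 : j < d := lt_of_le_of_ne (Nat.lt_succ_iff.mp (Finset.mem_range.mp hj)) hne
    rw [Nat.choose_eq_zero_of_lt h1]
    simp
  · intro h
    exact absurd (Finset.self_mem_range_succ d) h

lemma tcoeff_rec (p : PolyConservedQuantity n S d) (s : ℝ) (dir : Surf) (W : Surf → MV n)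
    (hpar : ∀ t : ℝ, ∀ x, fderiv ℝ (fun y => pcEval p t y) x dir
      + t • wedge n (S.F x) (W x) (pcEval p t x) = 0) :
    ∀ k x, fderiv ℝ (tcoeff p s k) x dir + s • wedge n (S.F x) (W x) (tcoeff p s k x)
      + wedge n (S.F x) (W x) (tprev p s k x) = 0 := by
  intro k x
  by_cases hk : k < d + 2
  swap
  · have h1 : tcoeff p s k = fun _ => 0 := tcoeff_high p s k (by omega)
    have h2 : tprev p s k = fun _ => 0 := by
      cases k with
      | zero => rfl
      | succ k' => exact tcoeff_high p s k' (by omega)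
    rw [h1, h2]
    simp [wedge_zero₃, fderiv_const]
  · set A : ℕ → MV n := fun m => fderiv ℝ (tcoeff p s m) x dir with hA
    set B : ℕ → MV n := fun m => wedge n (S.F x) (W x) (tcoeff p s m x) with hB
    set P : ℕ → MV n := fun m => wedge n (S.F x) (W x) (tprev p s m x) with hP2
    have hvan : ∀ t : ℝ, ∑ m ∈ Finset.range (d+2), t ^ m • (A m + s • B m + P m) = 0 := by
      intro t
      have hp1 := hpar (t+s) x
      have hfeq : (fun y => pcEval p (t+s) y)
          = (fun y => ∑ m ∈ Finset.range (d+2), t ^ m • tcoeff p s m y) :=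
        funext fun y => (tcoeff_eval' p s t y).symm
      have hveq : pcEval p (t+s) x = ∑ m ∈ Finset.range (d+2), t ^ m • tcoeff p s m x :=
        (tcoeff_eval' p s t x).symm
      rw [hfeq, hveq] at hp1
      have hder : fderiv ℝ (fun y => ∑ m ∈ Finset.range (d+2), t ^ m • tcoeff p s m y) x
          = ∑ m ∈ Finset.range (d+2), t ^ m • fderiv ℝ (tcoeff p s m) x := by
        apply HasFDerivAt.fderiv
        apply HasFDerivAt.fun_sum
        intro m _
        exact (((tcoeff_smooth p s m).differentiable (by simp) x).hasFDerivAt).const_smul (t ^ m)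
      rw [hder] at hp1
      simp only [ContinuousLinearMap.sum_apply, ContinuousLinearMap.smul_apply] at hp1
      rw [wedge_sum₃] at hp1
      simp only [wedge_smul₃] at hp1
      -- hp1 : ∑ A-terms + (t+s) • ∑ t^m • B m = 0
      have hBtop : B (d+1) = 0 := by
        rw [hB]
        show wedge n (S.F x) (W x) (tcoeff p s (d+1) x) = 0
        rw [tcoeff_high p s (d+1) (by omega)]
        exact wedge_zero₃ _ _
      have q1 : ∑ m ∈ Finset.range (d+2), t ^ m • (A m + s • B m + P m)
          = (∑ m ∈ Finset.range (d+2), t ^ m • A m)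
            + (∑ m ∈ Finset.range (d+2), t ^ m • (s • B m))
            + (∑ m ∈ Finset.range (d+2), t ^ m • P m) := by
        rw [← Finset.sum_add_distrib, ← Finset.sum_add_distrib]
        apply Finset.sum_congr rfl
        intro m _
        rw [smul_add, smul_add]
      have q2 : ∑ m ∈ Finset.range (d+2), t ^ m • P m
          = ∑ m ∈ Finset.range (d+1), t ^ (m+1) • B m := by
        rw [Finset.sum_range_succ']
        have hP0 : P 0 = 0 := by
          rw [hP2]
          show wedge n (S.F x) (W x) ((fun _ => (0:MV n)) x) = 0
          exact wedge_zero₃ _ _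
        rw [hP0, smul_zero, add_zero]
        rfl
      have q3 : (t+s) • (∑ m ∈ Finset.range (d+2), t ^ m • B m)
          = (∑ m ∈ Finset.range (d+2), t ^ m • (s • B m))
            + (∑ m ∈ Finset.range (d+1), t ^ (m+1) • B m) := by
        rw [add_smul, Finset.smul_sum, Finset.smul_sum]
        rw [add_comm]
        congr 1
        · apply Finset.sum_congr rfl
          intro m _
          rw [smul_smul, smul_smul, mul_comm]
        · rw [Finset.sum_range_succ, hBtop, smul_zero, smul_zero, add_zero]
          apply Finset.sum_congr rfl
          intro m _
          rw [smul_smul, ← pow_succ']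
      rw [q1, q2, add_assoc, ← q3]
      exact hp1
    have := poly_coeff_zero_vec (d+2) (fun m => A m + s • B m + P m) hvan k hk
    calc fderiv ℝ (tcoeff p s k) x dir + s • wedge n (S.F x) (W x) (tcoeff p s k x)
        + wedge n (S.F x) (W x) (tprev p s k x) = A k + s • B k + P k := rfl
      _ = 0 := this

end TCoeff

/-- Theorem: a T-transform of a special isothermic surface of type `d` is
special isothermic of type `d`, with respect to the polynomial conserved
quantity `q(t) = Φ_s p(t+s)`, whose constant term is `Φ_s(p(s))`. -/
theorem ttransform_special (n d : ℕ) (S : IsothermicSurface n)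
    (p : PolyConservedQuantity n S d) (s : ℝ)
    (Φ : Surf → MV n → MV n) (Ss : IsothermicSurface n)
    (hT : IsTTransform n S s Φ Ss) :
    ∃ q : PolyConservedQuantity n Ss d,
      (∀ x, q.coeff 0 x = Φ x (pcEval p s x))
      ∧ ∀ t x, pcEval q t x = Φ x (pcEval p (t + s) x) := by
  obtain ⟨⟨hlin, hmet, hgauge⟩, hSsF, hW1, hW2⟩ := hT
  -- elementary algebra of the pointwise linear maps Φ x
  have hmap_add : ∀ x a b, Φ x (a + b) = Φ x a + Φ x b := fun x a b => (hlin x).map_add a b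
  have hmap_smul : ∀ x (r : ℝ) a, Φ x (r • a) = r • Φ x a := fun x r a => (hlin x).map_smul r a
  have hmap_zero : ∀ x, Φ x (0 : MV n) = 0 := fun x => (hlin x).map_zero
  have hmap_neg : ∀ x a, Φ x (-a) = - Φ x a := fun x a => (hlin x).map_neg a
  have hmap_sum : ∀ (x : Surf) (N : ℕ) (g : ℕ → MV n),
      Φ x (∑ k ∈ Finset.range N, g k) = ∑ k ∈ Finset.range N, Φ x (g k) := by
    intro x N g
    exact map_sum (IsLinearMap.mk' (Φ x) (hlin x)) g (Finset.range N)
  -- injectivity of Φ x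
  have hinj : ∀ (x : Surf) (v : MV n), Φ x v = 0 → v = 0 := by
    intro x v hv
    apply mink_nondeg (n := n)
    intro z
    have h1 := hmet x v z
    rw [hv, mink_zero_left] at h1
    exact h1.symm
  -- differentiability of Φ applied to a smooth section
  have hdiffat : ∀ (σ : Surf → MV n), ContDiff ℝ (⊤ : ℕ∞) σ → ∀ x,
      DifferentiableAt ℝ (fun y => Φ y (σ y)) x := by
    intro σ hσ x
    set A : MV n := fderiv ℝ σ x du + s • wedge n (S.F x) (S.W₁ x) (σ x) with hA
    have he0ne : (EuclideanSpace.single (0 : Fin (n+2)) (1:ℝ)) ≠ 0 := by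
      intro h
      have h1 : (1:ℝ) = 0 := by
        simpa [EuclideanSpace.single_apply] using congrArg (fun v : MV n => v (0 : Fin (n+2))) h
      exact one_ne_zero h1
    obtain ⟨v, hv0, hvA⟩ : ∃ v : MV n, v ≠ 0 ∧ A + v ≠ 0 := by
      set e0 : MV n := EuclideanSpace.single (0 : Fin (n+2)) (1:ℝ) with he0
      by_cases hA0 : A + e0 = 0
      · refine ⟨e0 + e0, ?_, ?_⟩
        · intro h
          apply he0ne
          have h2 : (2:ℝ) • e0 = 0 := by rw [two_smul]; exact h
          rcases smul_eq_zero.mp h2 with h3 | h3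
          · norm_num at h3
          · exact h3
        · rw [← add_assoc, hA0, zero_add]; exact he0ne
      · exact ⟨e0, he0ne, hA0⟩
    set ρ : Surf → MV n := fun y => (y.1 - x.1) • v with hρ
    have hρs : ContDiff ℝ (⊤ : ℕ∞) ρ := (contDiff_fst.sub contDiff_const).smul contDiff_const
    have hρx : ρ x = 0 := by simp [hρ]
    have hρd : fderiv ℝ ρ x du = v := by
      have hℓ : ρ = fun y => ((ContinuousLinearMap.fst ℝ ℝ ℝ).smulRight v) y - x.1 • v := by
        funext y
        show (y.1 - x.1) • v = y.1 • v - x.1 • v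
        rw [sub_smul]
      rw [hℓ, fderiv_sub_const, ContinuousLinearMap.fderiv]
      show du.1 • v = v
      rw [show du.1 = (1:ℝ) from rfl, one_smul]
    have hρdiff : DifferentiableAt ℝ (fun y => Φ y (ρ y)) x := by
      by_contra hnd
      have h3 := (hgauge ρ hρs x).1
      rw [fderiv_zero_of_not_differentiableAt hnd] at h3
      rw [hρx, wedge_zero₃, smul_zero, add_zero, hρd,
        ContinuousLinearMap.zero_apply] at h3
      exact hv0 (hinj x v h3.symm)
    have hτdiff : DifferentiableAt ℝ (fun y => Φ y (σ y + ρ y)) x := by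
      by_contra hnd
      have h3 := (hgauge (fun y => σ y + ρ y) (hσ.add hρs) x).1
      rw [fderiv_zero_of_not_differentiableAt hnd] at h3
      have h5 : fderiv ℝ (fun y => σ y + ρ y) x = fderiv ℝ σ x + fderiv ℝ ρ x :=
        fderiv_fun_add ((hσ.differentiable (by simp)) x) ((hρs.differentiable (by simp)) x)
      rw [h5, ContinuousLinearMap.add_apply, hρd, hρx, add_zero,
        ContinuousLinearMap.zero_apply] at h3
      have h7 : fderiv ℝ σ x du + v + s • wedge n (S.F x) (S.W₁ x) (σ x) = A + v := by
        rw [hA]; abel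
      rw [h7] at h3
      exact hvA (hinj x (A + v) h3.symm)
    have hfun : (fun y => Φ y (σ y)) = fun y => Φ y (σ y + ρ y) - Φ y (ρ y) := by
      funext y
      rw [hmap_add]
      abel
    rw [hfun]
    exact hτdiff.sub hρdiff
  -- the parallel equations for p
  have hpar1 : ∀ (t : ℝ) (x : Surf), fderiv ℝ (fun y => pcEval p t y) x du
      + t • wedge n (S.F x) (S.W₁ x) (pcEval p t x) = 0 := fun t x => (p.conserved t x).1
  have hpar2 : ∀ (t : ℝ) (x : Surf), fderiv ℝ (fun y => pcEval p t y) x dv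
      + t • wedge n (S.F x) (S.W₂ x) (pcEval p t x) = 0 := fun t x => (p.conserved t x).2
  have hrec1 := tcoeff_rec p s du S.W₁ hpar1
  have hrec2 := tcoeff_rec p s dv S.W₂ hpar2
  -- derivatives of the new coefficients
  have hQder1 : ∀ k x, fderiv ℝ (fun y => Φ y (tcoeff p s k y)) x du
      = - wedge n (Ss.F x) (Ss.W₁ x) (Φ x (tprev p s k x)) := by
    intro k x
    have hg1 := (hgauge (tcoeff p s k) (tcoeff_smooth p s k) x).1
    have h2 : fderiv ℝ (tcoeff p s k) x du + s • wedge n (S.F x) (S.W₁ x) (tcoeff p s k x)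
        = - wedge n (S.F x) (S.W₁ x) (tprev p s k x) :=
      eq_neg_of_add_eq_zero_left (hrec1 k x)
    rw [hg1, h2, hmap_neg, hW1]
  have hQder2 : ∀ k x, fderiv ℝ (fun y => Φ y (tcoeff p s k y)) x dv
      = - wedge n (Ss.F x) (Ss.W₂ x) (Φ x (tprev p s k x)) := by
    intro k x
    have hg1 := (hgauge (tcoeff p s k) (tcoeff_smooth p s k) x).2
    have h2 : fderiv ℝ (tcoeff p s k) x dv + s • wedge n (S.F x) (S.W₂ x) (tcoeff p s k x)
        = - wedge n (S.F x) (S.W₂ x) (tprev p s k x) :=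
      eq_neg_of_add_eq_zero_left (hrec2 k x)
    rw [hg1, h2, hmap_neg, hW2]
  -- analyticity of the new coefficients
  have hQsmooth : ∀ k, ContDiff ℝ (⊤ : ℕ∞) (fun x => Φ x (tcoeff p s k x)) := by
    have step : ∀ k, ContDiff ℝ (⊤ : ℕ∞) (fun x => Φ x (tprev p s k x)) →
        ContDiff ℝ (⊤ : ℕ∞) (fun x => Φ x (tcoeff p s k x)) := by
      intro k hprev
      have hdiff : Differentiable ℝ (fun x => Φ x (tcoeff p s k x)) :=
        fun x => hdiffat (tcoeff p s k) (tcoeff_smooth p s k) x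
      have hfd : fderiv ℝ (fun x => Φ x (tcoeff p s k x)) = fun x =>
          (ContinuousLinearMap.fst ℝ ℝ ℝ).smulRight
            (- wedge n (Ss.F x) (Ss.W₁ x) (Φ x (tprev p s k x)))
          + (ContinuousLinearMap.snd ℝ ℝ ℝ).smulRight
            (- wedge n (Ss.F x) (Ss.W₂ x) (Φ x (tprev p s k x))) := by
        funext x
        conv_lhs => rw [clm_decomp (fderiv ℝ (fun x => Φ x (tcoeff p s k x)) x)]
        rw [hQder1 k x, hQder2 k x]
      apply contDiffTop_of_fderiv hdiff
      rw [hfd]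
      apply ContDiff.add
      · exact (ContinuousLinearMap.smulRightL ℝ (ℝ × ℝ) (MV n)
            (ContinuousLinearMap.fst ℝ ℝ ℝ)).contDiff.comp
          ((contDiff_wedge Ss.smooth_F Ss.smooth_W₁ hprev).neg)
      · exact (ContinuousLinearMap.smulRightL ℝ (ℝ × ℝ) (MV n)
            (ContinuousLinearMap.snd ℝ ℝ ℝ)).contDiff.comp
          ((contDiff_wedge Ss.smooth_F Ss.smooth_W₂ hprev).neg)
    intro k
    induction k with
    | zero =>
      apply step 0
      have h0 : (fun x => Φ x (tprev p s 0 x)) = fun _ => (0 : MV n) :=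
        funext fun x => hmap_zero x
      rw [h0]
      exact contDiff_const
    | succ k ih => exact step (k+1) ih
  -- the evaluation identity
  have hfun2 : ∀ t : ℝ, (fun x => ∑ k ∈ Finset.range (d+1), t ^ k • Φ x (tcoeff p s k x))
      = fun x => Φ x (pcEval p (t+s) x) := by
    intro t
    funext y
    calc ∑ k ∈ Finset.range (d+1), t ^ k • Φ y (tcoeff p s k y)
        = ∑ k ∈ Finset.range (d+1), Φ y (t ^ k • tcoeff p s k y) :=
          Finset.sum_congr rfl fun k _ => (hmap_smul y _ _).symm
      _ = Φ y (∑ k ∈ Finset.range (d+1), t ^ k • tcoeff p s k y) := (hmap_sum y _ _).symm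
      _ = Φ y (pcEval p (t+s) y) := by rw [tcoeff_eval p s t y]
  -- smoothness of the evaluations of p
  have hpcsmooth : ∀ t : ℝ, ContDiff ℝ (⊤ : ℕ∞) (fun y => pcEval p t y) := by
    intro t
    unfold pcEval
    exact ContDiff.sum fun k _ => (p.smooth k).const_smul _
  -- assemble the polynomial conserved quantity
  refine ⟨⟨fun k x => Φ x (tcoeff p s k x), hQsmooth, ?_, ?_, ?_⟩, ?_, ?_⟩
  · -- coeff_eq_zero
    intro k hk
    funext x
    have h1 : tcoeff p s k x = 0 := congrFun (tcoeff_high p s k hk) x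
    show Φ x (tcoeff p s k x) = 0
    rw [h1]
    exact hmap_zero x
  · -- top_ne
    obtain ⟨x, hx⟩ := Function.ne_iff.mp p.top_ne
    intro h
    apply hx
    have h1 : Φ x (tcoeff p s d x) = 0 := congrFun h x
    have h2 : Φ x (p.coeff d x) = 0 := by rw [← tcoeff_top p s x]; exact h1
    exact hinj x _ h2
  · -- conserved
    intro t x
    constructor
    · show fderiv ℝ (fun x => ∑ k ∈ Finset.range (d+1), t ^ k • Φ x (tcoeff p s k x)) x du
        + t • wedge n (Ss.F x) (Ss.W₁ x)
            (∑ k ∈ Finset.range (d+1), t ^ k • Φ x (tcoeff p s k x)) = 0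
      rw [congrFun (hfun2 t) x, hfun2 t]
      have hg1 := (hgauge (fun y => pcEval p (t+s) y) (hpcsmooth (t+s)) x).1
      rw [hg1, hW1, ← hmap_smul x t, ← hmap_add x]
      rw [show fderiv ℝ (fun y => pcEval p (t+s) y) x du
          + s • wedge n (S.F x) (S.W₁ x) (pcEval p (t+s) x)
          + t • wedge n (S.F x) (S.W₁ x) (pcEval p (t+s) x)
          = fderiv ℝ (fun y => pcEval p (t+s) y) x du
          + (t+s) • wedge n (S.F x) (S.W₁ x) (pcEval p (t+s) x) by
        rw [add_smul]; abel]
      rw [hpar1 (t+s) x]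
      exact hmap_zero x
    · show fderiv ℝ (fun x => ∑ k ∈ Finset.range (d+1), t ^ k • Φ x (tcoeff p s k x)) x dv
        + t • wedge n (Ss.F x) (Ss.W₂ x)
            (∑ k ∈ Finset.range (d+1), t ^ k • Φ x (tcoeff p s k x)) = 0
      rw [congrFun (hfun2 t) x, hfun2 t]
      have hg1 := (hgauge (fun y => pcEval p (t+s) y) (hpcsmooth (t+s)) x).2
      rw [hg1, hW2, ← hmap_smul x t, ← hmap_add x]
      rw [show fderiv ℝ (fun y => pcEval p (t+s) y) x dv
          + s • wedge n (S.F x) (S.W₂ x) (pcEval p (t+s) x)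
          + t • wedge n (S.F x) (S.W₂ x) (pcEval p (t+s) x)
          = fderiv ℝ (fun y => pcEval p (t+s) y) x dv
          + (t+s) • wedge n (S.F x) (S.W₂ x) (pcEval p (t+s) x) by
        rw [add_smul]; abel]
      rw [hpar2 (t+s) x]
      exact hmap_zero x
  · -- constant term
    intro x
    show Φ x (tcoeff p s 0 x) = Φ x (pcEval p s x)
    rw [tcoeff_zero p s x]
  · -- evaluation
    intro t x
    show ∑ k ∈ Finset.range (d+1), t ^ k • Φ x (tcoeff p s k x) = Φ x (pcEval p (t+s) x)
    exact congrFun (hfun2 t) x
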